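/- arXiv:1512.00558 — 2 statements merged into one kernel-verified Lean document; each statement's English description precedes it below -/
import Mathlib

section
/- Let X be a topological space endowed with an equivalence relation R such that the quotient map q: X → X/R is an open map, and let θ: N → X be a continuous, open, surjective map from a topological space N. Define the equivalence relation S on N by: n₁ S n₂ iff θ(n₁) R θ(n₂). Then the induced map β: N/S → X/R, [n] ↦ [θ(n)], is well defined and is a homeomorphism, where both orbit sets N/S and X/R carry their quotient topologies. -/
/-- Let `X` carry an equivalence relation `R` whose quotient map is open, and let
`θ : N → X` be a continuous open surjection.  Define `S` on `N` by
`n₁ S n₂ ↔ θ n₁ R θ n₂`.  Then the induced map `β : N/S → X/R`, `[n] ↦ [θ n]`, is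
well defined and is a homeomorphism for the quotient topologies. -/
theorem stmt_8 {X N : Type*} [TopologicalSpace X] [TopologicalSpace N]
    (R : Setoid X) (hq : IsOpenMap (Quotient.mk R))
    (θ : N → X) (hθc : Continuous θ) (hθo : IsOpenMap θ) (hθs : Function.Surjective θ)
    (S : Setoid N) (hS : ∀ n₁ n₂ : N, S.r n₁ n₂ ↔ R.r (θ n₁) (θ n₂)) :
    ∃ β : Quotient S → Quotient R,
      (∀ n : N, β (Quotient.mk S n) = Quotient.mk R (θ n)) ∧ IsHomeomorph β := by
  refine ⟨Quotient.lift (fun n => Quotient.mk R (θ n))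
      (fun a b hab => Quotient.sound ((hS a b).mp hab)), fun n => rfl, ?_, ?_, ?_⟩
  · -- continuous
    exact continuous_quot_lift _ (continuous_quotient_mk'.comp hθc)
  · -- open map
    intro U hU
    have : IsOpen (Quotient.mk S ⁻¹' U) := hU.preimage continuous_quotient_mk'
    have himg : (Quotient.lift (fun n => Quotient.mk R (θ n))
        (fun a b hab => Quotient.sound ((hS a b).mp hab))) '' U
        = Quotient.mk R '' (θ '' (Quotient.mk S ⁻¹' U)) := by
      ext x
      simp only [Set.mem_image, Set.mem_preimage]
      constructor
      · rintro ⟨u, hu, rfl⟩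
        obtain ⟨n, rfl⟩ := Quotient.exists_rep u
        exact ⟨θ n, ⟨n, hu, rfl⟩, rfl⟩
      · rintro ⟨y, ⟨n, hn, rfl⟩, rfl⟩
        exact ⟨Quotient.mk S n, hn, rfl⟩
    rw [himg]
    exact hq _ (hθo _ this)
  · -- bijective
    constructor
    · intro a b hab
      obtain ⟨n₁, rfl⟩ := Quotient.exists_rep a
      obtain ⟨n₂, rfl⟩ := Quotient.exists_rep b
      exact Quotient.sound ((hS n₁ n₂).mpr (Quotient.exact hab))
    · intro y
      obtain ⟨x, rfl⟩ := Quotient.exists_rep y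
      obtain ⟨n, rfl⟩ := hθs x
      exact ⟨Quotient.mk S n, rfl⟩
end

section
/- Let A be an n×n upper-triangular complex matrix such that every diagonal entry of A has the form (1 + iθ)·t for some real numbers θ and t (possibly depending on the entry). Then −1 is not an eigenvalue of the matrix exponential exp(A); equivalently, −1 does not belong to the spectrum of exp(A). -/
/-!
`exp A` is upper triangular with diagonal entries `exp (A i i)`, so its eigenvalues are these
entries. Since `‖exp ((1 + iθ) t)‖ = exp t`, such an entry can equal `-1` only when `t = 0`,
where it is `1`.
-/

open NormedSpace Finset Polynomial

namespace Matrix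

variable {m R : Type*} [Fintype m] [LinearOrder m]

theorem IsUpperTriangular.mul_apply_self [NonUnitalNonAssocSemiring R] {M N : Matrix m m R}
    (hM : M.IsUpperTriangular) (hN : N.IsUpperTriangular) (i : m) :
    (M * N) i i = M i i * N i i := by
  refine (sum_eq_single i (fun k _ hk => ?_) (by simp)).trans rfl
  rcases hk.lt_or_gt with h | h
  · simp [hM h]
  · simp [hN h]

theorem IsUpperTriangular.pow_apply_self [Semiring R] {M : Matrix m m R}
    (hM : M.IsUpperTriangular) (k : ℕ) (i : m) : (M ^ k) i i = M i i ^ k := by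
  induction k with
  | zero => simp
  | succ k ih =>
    have hMk : (M ^ k).IsUpperTriangular := hM.pow k
    rw [pow_succ, hMk.mul_apply_self hM, ih, pow_succ]

theorem IsUpperTriangular.exp_apply_self {𝕜 : Type*} [RCLike 𝕜] {M : Matrix m m 𝕜}
    (hM : M.IsUpperTriangular) (i : m) : exp M i i = exp (M i i) := by
  -- The operator norm is only needed to obtain this `HasSum`, which is purely topological.
  have hM_exp := open scoped Norms.Operator in exp_series_hasSum_exp' (𝕂 := 𝕜) M
  have hMii_exp := Pi.hasSum.mp hM_exp.matrix_diag i
  simp only [diag_apply, smul_apply, hM.pow_apply_self] at hMii_exp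
  exact hMii_exp.unique (exp_series_hasSum_exp' (M i i))

theorem IsUpperTriangular.det_sub_smul_one [CommRing R] {M : Matrix m m R}
    (hM : M.IsUpperTriangular) (r : R) : (M - r • 1).det = ∏ i, (M i i - r) := by
  have hr : (r • 1 : Matrix m m R).IsUpperTriangular := by
    rw [smul_one_eq_diagonal]
    exact blockTriangular_diagonal _
  simp [det_of_isUpperTriangular (hM.sub hr)]

theorem IsUpperTriangular.mem_spectrum_iff {K : Type*} [Field K] {M : Matrix m m K}
    (hM : M.IsUpperTriangular) {r : K} : r ∈ spectrum K M ↔ ∃ i, M i i = r := by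
  rw [mem_spectrum_iff_isRoot_charpoly, charpoly_of_isUpperTriangular M hM, IsRoot.def, eval_prod,
    prod_eq_zero_iff]
  simp [sub_eq_zero, eq_comm]

end Matrix

theorem Complex.exp_one_add_mul_I_mul_ne_neg_one (θ t : ℝ) :
    exp ((1 + θ * I) * t) ≠ -1 := by
  intro h
  have ht : t = 0 := by
    have hnorm := congrArg norm h
    rw [norm_exp, norm_neg, norm_one] at hnorm
    simpa using hnorm
  norm_num [ht] at h

/-- If `A` is an upper-triangular complex `n×n` matrix all of whose diagonal entries
have the form `(1 + iθ)·t` with `θ, t ∈ ℝ`, then `−1` is not an eigenvalue of the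
matrix exponential `exp(A)`: `det(exp(A) − (−1)·I) ≠ 0`, equivalently `−1` does not
belong to the spectrum of `exp(A)`. -/
theorem stmt_15 {n : ℕ} (A : Matrix (Fin n) (Fin n) ℂ)
    (htri : ∀ i j : Fin n, j < i → A i j = 0)
    (hdiag : ∀ i : Fin n, ∃ θ t : ℝ, A i i = (1 + (θ : ℂ) * Complex.I) * (t : ℂ)) :
    (NormedSpace.exp A - (-1 : ℂ) • (1 : Matrix (Fin n) (Fin n) ℂ)).det ≠ 0 ∧
      (-1 : ℂ) ∉ spectrum ℂ (NormedSpace.exp A) := by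
  have hA : A.IsUpperTriangular := fun i j h => htri i j h
  have hexpA : (exp A).IsUpperTriangular := hA.exp
  have hexpA_diag : ∀ i, exp A i i ≠ -1 := fun i => by
    obtain ⟨θ, t, hAii⟩ := hdiag i
    rw [hA.exp_apply_self, hAii, ← Complex.exp_eq_exp_ℂ]
    exact Complex.exp_one_add_mul_I_mul_ne_neg_one θ t
  refine ⟨?_, fun hmem => ?_⟩
  · rw [hexpA.det_sub_smul_one]
    exact prod_ne_zero_iff.mpr fun i _ => sub_ne_zero.mpr (hexpA_diag i)
  · obtain ⟨i, hi⟩ := hexpA.mem_spectrum_iff.mp hmem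
    exact hexpA_diag i hi
end
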